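/- arXiv:2211.00487 — 14 statements merged into one kernel-verified Lean document; each statement's English description precedes it below -/
import Mathlib

section
/- With the notation of the [562]a construction and its deformation, the following identities hold in R for every t ∈ k: (i) t·F1 = x2·Q3' − x1·Q4' and t·F1 = x4·Q1' − x3·Q2'; (ii) t·G12 = y1·F2' − V3·Q1' − V4·Q2'; (iii) t·G34 = y2·F2' − U1·Q3' − U2·Q4'. In particular, if t is invertible then F1, G12 and G34 lie in the ideal generated by Q1', Q2', Q3', Q4' and F2'. -/
/-- Identities in the [562]a / [562]ai deformation: over a commutative ring `k`,
in `R = k[x1,x2,x3,x4,y1,y2]`, for every `t ∈ k` we have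
`t·F1 = x2·Q3' − x1·Q4'`, `t·F1 = x4·Q1' − x3·Q2'`,
`t·G12 = y1·F2' − V3·Q1' − V4·Q2'`, `t·G34 = y2·F2' − U1·Q3' − U2·Q4'`;
in particular, if `t` is a unit then `F1`, `G12`, `G34` lie in the ideal
generated by `Q1', Q2', Q3', Q4', F2'`. -/
theorem stmt_0 {k : Type*} [CommRing k]
    (a13 a14 a23 a24 b13 b14 b23 b24 H : MvPolynomial (Fin 6) k) (t : k)
    (x1 x2 x3 x4 y1 y2 S1 S2 T3 T4 U1 U2 V3 V4 F1 F2
      Q1' Q2' Q3' Q4' F2' G12 G34 : MvPolynomial (Fin 6) k)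
    (hx1 : x1 = MvPolynomial.X 0) (hx2 : x2 = MvPolynomial.X 1)
    (hx3 : x3 = MvPolynomial.X 2) (hx4 : x4 = MvPolynomial.X 3)
    (hy1 : y1 = MvPolynomial.X 4) (hy2 : y2 = MvPolynomial.X 5)
    (hS1 : S1 = a13 * x3 + a14 * x4) (hS2 : S2 = a23 * x3 + a24 * x4)
    (hT3 : T3 = a13 * x1 + a23 * x2) (hT4 : T4 = a14 * x1 + a24 * x2)
    (hU1 : U1 = b13 * x3 + b14 * x4) (hU2 : U2 = b23 * x3 + b24 * x4)
    (hV3 : V3 = b13 * x1 + b23 * x2) (hV4 : V4 = b14 * x1 + b24 * x2)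
    (hF1 : F1 = x1 * S1 + x2 * S2) (hF2 : F2 = x1 * U1 + x2 * U2)
    (hQ1' : Q1' = x3 * y1 + MvPolynomial.C t * T4)
    (hQ2' : Q2' = x4 * y1 - MvPolynomial.C t * T3)
    (hQ3' : Q3' = x1 * y2 + MvPolynomial.C t * S2)
    (hQ4' : Q4' = x2 * y2 - MvPolynomial.C t * S1)
    (hF2' : F2' = F2 + MvPolynomial.C t * H)
    (hG12 : G12 = y1 * H + (T3 * V4 - T4 * V3))
    (hG34 : G34 = y2 * H + (S1 * U2 - S2 * U1)) :
    (MvPolynomial.C t * F1 = x2 * Q3' - x1 * Q4' ∧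
      MvPolynomial.C t * F1 = x4 * Q1' - x3 * Q2') ∧
    MvPolynomial.C t * G12 = y1 * F2' - V3 * Q1' - V4 * Q2' ∧
    MvPolynomial.C t * G34 = y2 * F2' - U1 * Q3' - U2 * Q4' ∧
    (IsUnit t →
      F1 ∈ Ideal.span {Q1', Q2', Q3', Q4', F2'} ∧
      G12 ∈ Ideal.span {Q1', Q2', Q3', Q4', F2'} ∧
      G34 ∈ Ideal.span {Q1', Q2', Q3', Q4', F2'}) := by
  have e1 : MvPolynomial.C t * F1 = x2 * Q3' - x1 * Q4' := by subst_vars; ring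
  have e2 : MvPolynomial.C t * F1 = x4 * Q1' - x3 * Q2' := by subst_vars; ring
  have e3 : MvPolynomial.C t * G12 = y1 * F2' - V3 * Q1' - V4 * Q2' := by
    subst_vars; ring
  have e4 : MvPolynomial.C t * G34 = y2 * F2' - U1 * Q3' - U2 * Q4' := by
    subst_vars; ring
  refine ⟨⟨e1, e2⟩, e3, e4, fun ht => ?_⟩
  have key : ∀ (f : MvPolynomial (Fin 6) k) (I : Ideal (MvPolynomial (Fin 6) k)),
      MvPolynomial.C t * f ∈ I → f ∈ I := by
    intro f I hm
    obtain ⟨u, hu⟩ := ht.map (MvPolynomial.C : k →+* MvPolynomial (Fin 6) k)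
    have : f = (↑u⁻¹ : MvPolynomial (Fin 6) k) * (MvPolynomial.C t * f) := by
      rw [← mul_assoc, ← hu, Units.inv_mul, one_mul]
    rw [this]
    exact I.mul_mem_left _ hm
  set I := Ideal.span {Q1', Q2', Q3', Q4', F2'} with hI
  have h1 : Q1' ∈ I := Ideal.subset_span (by simp)
  have h2 : Q2' ∈ I := Ideal.subset_span (by simp)
  have h3 : Q3' ∈ I := Ideal.subset_span (by simp)
  have h4 : Q4' ∈ I := Ideal.subset_span (by simp)
  have h5 : F2' ∈ I := Ideal.subset_span (by simp)
  refine ⟨key _ _ ?_, key _ _ ?_, key _ _ ?_⟩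
  · rw [e2]; exact I.sub_mem (I.mul_mem_left _ h1) (I.mul_mem_left _ h2)
  · rw [e3]
    exact I.sub_mem (I.sub_mem (I.mul_mem_left _ h5) (I.mul_mem_left _ h1))
      (I.mul_mem_left _ h2)
  · rw [e4]
    exact I.sub_mem (I.sub_mem (I.mul_mem_left _ h5) (I.mul_mem_left _ h3))
      (I.mul_mem_left _ h4)
end

section
/- With the notation of the [562]ai deformation, if t ≠ 0 then the ideal of R generated by {Q1', Q2', Q3', Q4', Q5', F1, F2', G12, G34} equals the ideal generated by {Q1', Q2', Q3', Q4', Q5', F2'} (i.e., for t invertible the generators F1, G12 and G34 are redundant). -/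
/-- [562]ai deformation: over a field `k`, if `t ≠ 0` then in
`R = k[x1,x2,x3,x4,y1,y2]` the ideal generated by
`{Q1', Q2', Q3', Q4', Q5', F1, F2', G12, G34}` equals the ideal generated by
`{Q1', Q2', Q3', Q4', Q5', F2'}`. -/
theorem stmt_1 {k : Type*} [Field k]
    (a13 a14 a23 a24 b13 b14 b23 b24 H : MvPolynomial (Fin 6) k) (t : k)
    (ht : t ≠ 0)
    (x1 x2 x3 x4 y1 y2 S1 S2 T3 T4 U1 U2 V3 V4 F1 F2
      Q1' Q2' Q3' Q4' Q5' F2' G12 G34 : MvPolynomial (Fin 6) k)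
    (hx1 : x1 = MvPolynomial.X 0) (hx2 : x2 = MvPolynomial.X 1)
    (hx3 : x3 = MvPolynomial.X 2) (hx4 : x4 = MvPolynomial.X 3)
    (hy1 : y1 = MvPolynomial.X 4) (hy2 : y2 = MvPolynomial.X 5)
    (hS1 : S1 = a13 * x3 + a14 * x4) (hS2 : S2 = a23 * x3 + a24 * x4)
    (hT3 : T3 = a13 * x1 + a23 * x2) (hT4 : T4 = a14 * x1 + a24 * x2)
    (hU1 : U1 = b13 * x3 + b14 * x4) (hU2 : U2 = b23 * x3 + b24 * x4)
    (hV3 : V3 = b13 * x1 + b23 * x2) (hV4 : V4 = b14 * x1 + b24 * x2)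
    (hF1 : F1 = x1 * S1 + x2 * S2) (hF2 : F2 = x1 * U1 + x2 * U2)
    (hQ1' : Q1' = x3 * y1 + MvPolynomial.C t * T4)
    (hQ2' : Q2' = x4 * y1 - MvPolynomial.C t * T3)
    (hQ3' : Q3' = x1 * y2 + MvPolynomial.C t * S2)
    (hQ4' : Q4' = x2 * y2 - MvPolynomial.C t * S1)
    (hQ5' : Q5' = y1 * y2 - MvPolynomial.C t ^ 2 * (a14 * a23 - a13 * a24))
    (hF2' : F2' = F2 + MvPolynomial.C t * H)
    (hG12 : G12 = y1 * H + (T3 * V4 - T4 * V3))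
    (hG34 : G34 = y2 * H + (S1 * U2 - S2 * U1)) :
    Ideal.span {Q1', Q2', Q3', Q4', Q5', F1, F2', G12, G34} =
      Ideal.span {Q1', Q2', Q3', Q4', Q5', F2'} := by
  have hC : (MvPolynomial.C t⁻¹ : MvPolynomial (Fin 6) k) * MvPolynomial.C t = 1 := by
    rw [← MvPolynomial.C_mul, inv_mul_cancel₀ ht, MvPolynomial.C_1]
  set I := Ideal.span {Q1', Q2', Q3', Q4', Q5', F2'} with hI
  have hQ1m : Q1' ∈ I := Ideal.subset_span (by simp)
  have hQ2m : Q2' ∈ I := Ideal.subset_span (by simp)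
  have hQ3m : Q3' ∈ I := Ideal.subset_span (by simp)
  have hQ4m : Q4' ∈ I := Ideal.subset_span (by simp)
  have hQ5m : Q5' ∈ I := Ideal.subset_span (by simp)
  have hF2m : F2' ∈ I := Ideal.subset_span (by simp)
  have inv_trick : ∀ (p q : MvPolynomial (Fin 6) k),
      MvPolynomial.C t * p = q → q ∈ I → p ∈ I := by
    intro p q hpq hq
    have : p = MvPolynomial.C t⁻¹ * q := by
      rw [← hpq, ← mul_assoc, hC, one_mul]
    rw [this]
    exact I.mul_mem_left _ hq
  have hF1m : F1 ∈ I := by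
    refine inv_trick _ (x2 * Q3' - x1 * Q4') ?_ (I.sub_mem (I.mul_mem_left _ hQ3m)
      (I.mul_mem_left _ hQ4m))
    subst hF1 hQ3' hQ4' hS1 hS2; ring
  have hG12m : G12 ∈ I := by
    refine inv_trick _ (y1 * F2' - V3 * Q1' - V4 * Q2') ?_
      (I.sub_mem (I.sub_mem (I.mul_mem_left _ hF2m) (I.mul_mem_left _ hQ1m))
        (I.mul_mem_left _ hQ2m))
    subst hG12 hF2' hF2 hQ1' hQ2' hU1 hU2 hV3 hV4 hT3 hT4; ring
  have hG34m : G34 ∈ I := by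
    refine inv_trick _ (y2 * F2' - U1 * Q3' - U2 * Q4') ?_
      (I.sub_mem (I.sub_mem (I.mul_mem_left _ hF2m) (I.mul_mem_left _ hQ3m))
        (I.mul_mem_left _ hQ4m))
    subst hG34 hF2' hF2 hQ3' hQ4' hS1 hS2 hU1 hU2; ring
  apply le_antisymm
  · rw [Ideal.span_le]
    intro p hp
    simp only [Set.mem_insert_iff, Set.mem_singleton_iff] at hp
    rcases hp with rfl|rfl|rfl|rfl|rfl|rfl|rfl|rfl|rfl
    exacts [hQ1m, hQ2m, hQ3m, hQ4m, hQ5m, hF1m, hF2m, hG12m, hG34m]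
  · apply Ideal.span_mono
    intro p hp
    simp only [Set.mem_insert_iff, Set.mem_singleton_iff] at hp ⊢
    tauto
end

section
/- With the notation of the [562]aii deformation, if t ≠ 0 then the ideal of R generated by {Q1, Q2, Q3', Q4', Q5, F1, F2, G12, G34} equals the ideal generated by {Q1, Q2, Q3', Q4', Q5, F2, G12} (i.e., for t invertible the generators F1 and G34 are redundant). -/
/-- [562]aii deformation: over a field `k`, if `t ≠ 0` then in
`R = k[x1,x2,x3,x4,y1,y2]` the ideal generated by
`{Q1, Q2, Q3', Q4', Q5, F1, F2, G12, G34}` equals the ideal generated by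
`{Q1, Q2, Q3', Q4', Q5, F2, G12}`. -/
theorem stmt_2 {k : Type*} [Field k]
    (a13 a14 a23 a24 b13 b14 b23 b24 H12 : MvPolynomial (Fin 6) k) (t : k)
    (ht : t ≠ 0)
    (x1 x2 x3 x4 y1 y2 S1 S2 T3 T4 U1 U2 V3 V4 F1 F2
      Q1 Q2 Q5 Q3' Q4' G12 G34 : MvPolynomial (Fin 6) k)
    (hx1 : x1 = MvPolynomial.X 0) (hx2 : x2 = MvPolynomial.X 1)
    (hx3 : x3 = MvPolynomial.X 2) (hx4 : x4 = MvPolynomial.X 3)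
    (hy1 : y1 = MvPolynomial.X 4) (hy2 : y2 = MvPolynomial.X 5)
    (hS1 : S1 = a13 * x3 + a14 * x4) (hS2 : S2 = a23 * x3 + a24 * x4)
    (hT3 : T3 = a13 * x1 + a23 * x2) (hT4 : T4 = a14 * x1 + a24 * x2)
    (hU1 : U1 = b13 * x3 + b14 * x4) (hU2 : U2 = b23 * x3 + b24 * x4)
    (hV3 : V3 = b13 * x1 + b23 * x2) (hV4 : V4 = b14 * x1 + b24 * x2)
    (hF1 : F1 = x1 * S1 + x2 * S2) (hF2 : F2 = x1 * U1 + x2 * U2)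
    (hQ1 : Q1 = x3 * y1) (hQ2 : Q2 = x4 * y1) (hQ5 : Q5 = y1 * y2)
    (hQ3' : Q3' = x1 * y2 + MvPolynomial.C t * S2)
    (hQ4' : Q4' = x2 * y2 - MvPolynomial.C t * S1)
    (hG12 : G12 = y1 * H12 + (T3 * V4 - T4 * V3))
    (hG34 : G34 = S1 * U2 - S2 * U1) :
    Ideal.span {Q1, Q2, Q3', Q4', Q5, F1, F2, G12, G34} =
      Ideal.span {Q1, Q2, Q3', Q4', Q5, F2, G12} := by

  have hCt : (MvPolynomial.C t : MvPolynomial (Fin 6) k) ≠ 0 := by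
    simpa using ht
  apply le_antisymm
  · rw [Ideal.span_le]
    intro p hp
    simp only [Set.mem_insert_iff, Set.mem_singleton_iff] at hp
    set I := Ideal.span ({Q1, Q2, Q3', Q4', Q5, F2, G12} : Set (MvPolynomial (Fin 6) k))
    have h3 : Q3' ∈ I := Ideal.subset_span (by simp)
    have h4 : Q4' ∈ I := Ideal.subset_span (by simp)
    have hF2m : F2 ∈ I := Ideal.subset_span (by simp)
    have hF1m : F1 ∈ I := by
      have key : F1 = MvPolynomial.C t⁻¹ * x2 * Q3' - MvPolynomial.C t⁻¹ * x1 * Q4' := by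
        have h1 : MvPolynomial.C t * F1 = x2 * Q3' - x1 * Q4' := by
          subst hF1 hQ3' hQ4' hS1 hS2; ring
        have hinv : MvPolynomial.C t * MvPolynomial.C t⁻¹ = (1 : MvPolynomial (Fin 6) k) := by
          rw [← MvPolynomial.C_mul, mul_inv_cancel₀ ht, MvPolynomial.C_1]
        linear_combination MvPolynomial.C t⁻¹ * h1 - F1 * hinv
      rw [key]
      exact sub_mem (Ideal.mul_mem_left _ _ h3) (Ideal.mul_mem_left _ _ h4)
    have hG34m : G34 ∈ I := by
      have key : G34 = MvPolynomial.C t⁻¹ * y2 * F2 - MvPolynomial.C t⁻¹ * U1 * Q3'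
          - MvPolynomial.C t⁻¹ * U2 * Q4' := by
        have h1 : MvPolynomial.C t * G34 = y2 * F2 - U1 * Q3' - U2 * Q4' := by
          subst hG34 hF2 hQ3' hQ4' hS1 hS2 hU1 hU2; ring
        have hinv : MvPolynomial.C t * MvPolynomial.C t⁻¹ = (1 : MvPolynomial (Fin 6) k) := by
          rw [← MvPolynomial.C_mul, mul_inv_cancel₀ ht, MvPolynomial.C_1]
        linear_combination MvPolynomial.C t⁻¹ * h1 - G34 * hinv
      rw [key]
      exact sub_mem (sub_mem (Ideal.mul_mem_left _ _ hF2m) (Ideal.mul_mem_left _ _ h3))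
        (Ideal.mul_mem_left _ _ h4)
    rcases hp with h|h|h|h|h|h|h|h|h <;> subst h <;>
      first
        | exact hF1m
        | exact hG34m
        | exact Ideal.subset_span (by simp)
  · apply Ideal.span_mono
    intro p hp
    simp only [Set.mem_insert_iff, Set.mem_singleton_iff] at hp ⊢
    tauto
end

section
/- With the notation of the [562]bi deformation, the following identities hold in R for every t ∈ k: (i) t·F2 = y1·Q3' − y0·Q4'; (ii) t·G2 = A1·Q2' + x0·F1 − L3·x1·Q1' + t·L2·L3·G1; (iii) t·H = A1·Q4' − L3·x1·Q3' + x1·F1. In particular, if t is invertible then F2, G2 and H lie in the ideal generated by Q1', Q2', Q3', Q4', G1 and F1. -/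
/-- Identities in the [562]bi deformation: over a commutative ring `k`, in
`R = k[x0,x1,y0,y1,z0,z1]`, for every `t ∈ k` we have
`t·F2 = y1·Q3' − y0·Q4'`,
`t·G2 = A1·Q2' + x0·F1 − L3·x1·Q1' + t·L2·L3·G1`,
`t·H = A1·Q4' − L3·x1·Q3' + x1·F1`;
in particular, if `t` is a unit then `F2`, `G2`, `H` lie in the ideal
generated by `Q1', Q2', Q3', Q4', G1, F1`. -/
theorem stmt_3 {k : Type*} [CommRing k]
    (L0 L1 L2 L3 A1 : MvPolynomial (Fin 6) k) (t : k)
    (x0 x1 y0 y1 z0 z1 F1 F2 G1 G2 H Q1' Q2' Q3' Q4' : MvPolynomial (Fin 6) k)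
    (hx0 : x0 = MvPolynomial.X 0) (hx1 : x1 = MvPolynomial.X 1)
    (hy0 : y0 = MvPolynomial.X 2) (hy1 : y1 = MvPolynomial.X 3)
    (hz0 : z0 = MvPolynomial.X 4) (hz1 : z1 = MvPolynomial.X 5)
    (hF1 : F1 = L3 * x1 * y0 - A1 * y1)
    (hF2 : F2 = L0 * L1 * y0 - L0 * L2 * y1)
    (hG1 : G1 = L0 * x0 - x1 ^ 2)
    (hG2 : G2 = L0 * L2 * L3 * x0 - L1 * A1 * x1)
    (hH : H = L0 * L2 * L3 * x1 - L0 * L1 * A1)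
    (hQ1' : Q1' = x0 * y0 - MvPolynomial.C t * L2 * x1)
    (hQ2' : Q2' = x0 * y1 - MvPolynomial.C t * L1 * x1)
    (hQ3' : Q3' = x1 * y0 - MvPolynomial.C t * L2 * L0)
    (hQ4' : Q4' = x1 * y1 - MvPolynomial.C t * L1 * L0) :
    MvPolynomial.C t * F2 = y1 * Q3' - y0 * Q4' ∧
    MvPolynomial.C t * G2 =
      A1 * Q2' + x0 * F1 - L3 * x1 * Q1' + MvPolynomial.C t * L2 * L3 * G1 ∧
    MvPolynomial.C t * H = A1 * Q4' - L3 * x1 * Q3' + x1 * F1 ∧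
    (IsUnit t →
      F2 ∈ Ideal.span {Q1', Q2', Q3', Q4', G1, F1} ∧
      G2 ∈ Ideal.span {Q1', Q2', Q3', Q4', G1, F1} ∧
      H ∈ Ideal.span {Q1', Q2', Q3', Q4', G1, F1}) := by
  have e1 : MvPolynomial.C t * F2 = y1 * Q3' - y0 * Q4' := by
    subst hF2 hQ3' hQ4'; ring
  have e2 : MvPolynomial.C t * G2 =
      A1 * Q2' + x0 * F1 - L3 * x1 * Q1' + MvPolynomial.C t * L2 * L3 * G1 := by
    subst hG2 hQ1' hQ2' hF1 hG1; ring
  have e3 : MvPolynomial.C t * H = A1 * Q4' - L3 * x1 * Q3' + x1 * F1 := by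
    subst hH hQ3' hQ4' hF1; ring
  refine ⟨e1, e2, e3, fun ht => ?_⟩
  obtain ⟨u, hu⟩ := ht
  set I := Ideal.span {Q1', Q2', Q3', Q4', G1, F1} with hI
  have mQ1 : Q1' ∈ I := Ideal.subset_span (by simp)
  have mQ2 : Q2' ∈ I := Ideal.subset_span (by simp)
  have mQ3 : Q3' ∈ I := Ideal.subset_span (by simp)
  have mQ4 : Q4' ∈ I := Ideal.subset_span (by simp)
  have mG1 : G1 ∈ I := Ideal.subset_span (by simp)
  have mF1 : F1 ∈ I := Ideal.subset_span (by simp)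
  have hinv : (MvPolynomial.C (↑u⁻¹ : k) : MvPolynomial (Fin 6) k) * MvPolynomial.C t = 1 := by
    rw [← MvPolynomial.C_mul, ← hu]
    simp
  have key : ∀ P : MvPolynomial (Fin 6) k,
      MvPolynomial.C t * P ∈ I → P ∈ I := by
    intro P hP
    have : P = MvPolynomial.C (↑u⁻¹ : k) * (MvPolynomial.C t * P) := by
      rw [← mul_assoc, hinv, one_mul]
    rw [this]
    exact I.mul_mem_left _ hP
  refine ⟨key _ ?_, key _ ?_, key _ ?_⟩
  · rw [e1]; exact I.sub_mem (I.mul_mem_left _ mQ3) (I.mul_mem_left _ mQ4)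
  · rw [e2]
    exact I.add_mem (I.sub_mem (I.add_mem (I.mul_mem_left _ mQ2)
      (I.mul_mem_left _ mF1)) (I.mul_mem_left _ mQ1)) (I.mul_mem_left _ mG1)
  · rw [e3]
    exact I.add_mem (I.sub_mem (I.mul_mem_left _ mQ4) (I.mul_mem_left _ mQ3))
      (I.mul_mem_left _ mF1)
end

section
/- With the notation of the [562]bi deformation, define the five polynomials P1 = t·x1·y1 − t²·L1·L0, P2 = x1·y0 − t·L2·L0, P3 = x0·y0 − t·L2·x1, P4 = t·L0·x0 − t·x1², P5 = x0·y1 − t·L1·x1 (these are the five 4×4 Pfaffians of the 5×5 skew-symmetric matrix with upper-triangular entries m12 = x0, m13 = x1, m14 = L2, m15 = 0, m23 = 0, m24 = t·L1, m25 = t·x1, m34 = y1, m35 = t·L0, m45 = y0, where the Pfaffian omitting index i with remaining indices j<k<l<m is m_jk·m_lm − m_jl·m_km + m_jm·m_kl). If t ≠ 0, then the ideal of R generated by {P1, P2, P3, P4, P5} equals the ideal generated by {Q1', Q2', Q3', Q4', G1}. -/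
/-- [562]bi deformation, Pfaffian form: over a field `k`, if `t ≠ 0` then the
ideal generated by the five `4 × 4` Pfaffians `P1, …, P5` of the given
`5 × 5` skew-symmetric matrix equals the ideal generated by
`{Q1', Q2', Q3', Q4', G1}`. -/
theorem stmt_4 {k : Type*} [Field k]
    (L0 L1 L2 L3 A1 : MvPolynomial (Fin 6) k) (t : k) (ht : t ≠ 0)
    (x0 x1 y0 y1 z0 z1 G1 Q1' Q2' Q3' Q4' P1 P2 P3 P4 P5 :
      MvPolynomial (Fin 6) k)
    (hx0 : x0 = MvPolynomial.X 0) (hx1 : x1 = MvPolynomial.X 1)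
    (hy0 : y0 = MvPolynomial.X 2) (hy1 : y1 = MvPolynomial.X 3)
    (hz0 : z0 = MvPolynomial.X 4) (hz1 : z1 = MvPolynomial.X 5)
    (hG1 : G1 = L0 * x0 - x1 ^ 2)
    (hQ1' : Q1' = x0 * y0 - MvPolynomial.C t * L2 * x1)
    (hQ2' : Q2' = x0 * y1 - MvPolynomial.C t * L1 * x1)
    (hQ3' : Q3' = x1 * y0 - MvPolynomial.C t * L2 * L0)
    (hQ4' : Q4' = x1 * y1 - MvPolynomial.C t * L1 * L0)
    (hP1 : P1 = MvPolynomial.C t * x1 * y1 - MvPolynomial.C t ^ 2 * L1 * L0)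
    (hP2 : P2 = x1 * y0 - MvPolynomial.C t * L2 * L0)
    (hP3 : P3 = x0 * y0 - MvPolynomial.C t * L2 * x1)
    (hP4 : P4 = MvPolynomial.C t * L0 * x0 - MvPolynomial.C t * x1 ^ 2)
    (hP5 : P5 = x0 * y1 - MvPolynomial.C t * L1 * x1) :
    Ideal.span {P1, P2, P3, P4, P5} =
      Ideal.span {Q1', Q2', Q3', Q4', G1} := by

  have hCt : (MvPolynomial.C t⁻¹ : MvPolynomial (Fin 6) k) * MvPolynomial.C t = 1 := by
    rw [← MvPolynomial.C_mul, inv_mul_cancel₀ ht, MvPolynomial.C_1]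
  have e1 : P1 = MvPolynomial.C t * Q4' := by rw [hP1, hQ4']; ring
  have e2 : P2 = Q3' := by rw [hP2, hQ3']
  have e3 : P3 = Q1' := by rw [hP3, hQ1']
  have e4 : P4 = MvPolynomial.C t * G1 := by rw [hP4, hG1]; ring
  have e5 : P5 = Q2' := by rw [hP5, hQ2']
  have f1 : Q4' = MvPolynomial.C t⁻¹ * P1 := by
    rw [e1, ← mul_assoc, hCt, one_mul]
  have f2 : G1 = MvPolynomial.C t⁻¹ * P4 := by
    rw [e4, ← mul_assoc, hCt, one_mul]
  apply le_antisymm <;> rw [Ideal.span_le] <;> intro p hp <;>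
    simp only [Set.mem_insert_iff, Set.mem_singleton_iff] at hp <;>
    rcases hp with (rfl|rfl|rfl|rfl|rfl)
  · rw [e1]
    exact Ideal.mul_mem_left _ _ (Ideal.subset_span (by simp))
  · rw [e2]; exact Ideal.subset_span (by simp)
  · rw [e3]; exact Ideal.subset_span (by simp)
  · rw [e4]
    exact Ideal.mul_mem_left _ _ (Ideal.subset_span (by simp))
  · rw [e5]; exact Ideal.subset_span (by simp)
  · rw [← e3]; exact Ideal.subset_span (by simp)
  · rw [← e5]; exact Ideal.subset_span (by simp)
  · rw [← e2]; exact Ideal.subset_span (by simp)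
  · rw [f1]
    exact Ideal.mul_mem_left _ _ (Ideal.subset_span (by simp))
  · rw [f2]
    exact Ideal.mul_mem_left _ _ (Ideal.subset_span (by simp))
end

section
/- With the notation of the [562]bi deformation, if t ≠ 0 then the ideal of R generated by {Q1', Q2', Q3', Q4', G1, G2, F1, F2, H} equals the ideal generated by {Q1', Q2', Q3', Q4', G1, F1} (i.e., for t invertible the generators F2, G2 and H are redundant). -/
lemma cancel_C {k : Type*} [Field k] {t : k} (ht : t ≠ 0)
    {I : Ideal (MvPolynomial (Fin 6) k)} {f : MvPolynomial (Fin 6) k}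
    (h : MvPolynomial.C t * f ∈ I) : f ∈ I := by
  have : f = MvPolynomial.C t⁻¹ * (MvPolynomial.C t * f) := by
    rw [← mul_assoc, ← MvPolynomial.C_mul, inv_mul_cancel₀ ht, MvPolynomial.C_1, one_mul]
  rw [this]
  exact Ideal.mul_mem_left _ _ h

/-- [562]bi deformation: over a field `k`, if `t ≠ 0` then the ideal
generated by `{Q1', Q2', Q3', Q4', G1, G2, F1, F2, H}` equals the ideal
generated by `{Q1', Q2', Q3', Q4', G1, F1}`. -/
theorem stmt_5 {k : Type*} [Field k]
    (L0 L1 L2 L3 A1 : MvPolynomial (Fin 6) k) (t : k) (ht : t ≠ 0)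
    (x0 x1 y0 y1 z0 z1 F1 F2 G1 G2 H Q1' Q2' Q3' Q4' : MvPolynomial (Fin 6) k)
    (hx0 : x0 = MvPolynomial.X 0) (hx1 : x1 = MvPolynomial.X 1)
    (hy0 : y0 = MvPolynomial.X 2) (hy1 : y1 = MvPolynomial.X 3)
    (hz0 : z0 = MvPolynomial.X 4) (hz1 : z1 = MvPolynomial.X 5)
    (hF1 : F1 = L3 * x1 * y0 - A1 * y1)
    (hF2 : F2 = L0 * L1 * y0 - L0 * L2 * y1)
    (hG1 : G1 = L0 * x0 - x1 ^ 2)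
    (hG2 : G2 = L0 * L2 * L3 * x0 - L1 * A1 * x1)
    (hH : H = L0 * L2 * L3 * x1 - L0 * L1 * A1)
    (hQ1' : Q1' = x0 * y0 - MvPolynomial.C t * L2 * x1)
    (hQ2' : Q2' = x0 * y1 - MvPolynomial.C t * L1 * x1)
    (hQ3' : Q3' = x1 * y0 - MvPolynomial.C t * L2 * L0)
    (hQ4' : Q4' = x1 * y1 - MvPolynomial.C t * L1 * L0) :
    Ideal.span {Q1', Q2', Q3', Q4', G1, G2, F1, F2, H} =
      Ideal.span {Q1', Q2', Q3', Q4', G1, F1} := by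
  set S : Set (MvPolynomial (Fin 6) k) := {Q1', Q2', Q3', Q4', G1, F1} with hS
  have m1 : Q1' ∈ Ideal.span S := Ideal.subset_span (by simp [hS])
  have m2 : Q2' ∈ Ideal.span S := Ideal.subset_span (by simp [hS])
  have m3 : Q3' ∈ Ideal.span S := Ideal.subset_span (by simp [hS])
  have m4 : Q4' ∈ Ideal.span S := Ideal.subset_span (by simp [hS])
  have m5 : G1 ∈ Ideal.span S := Ideal.subset_span (by simp [hS])
  have m6 : F1 ∈ Ideal.span S := Ideal.subset_span (by simp [hS])
  have hF2m : F2 ∈ Ideal.span S := by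
    apply cancel_C ht
    have h : MvPolynomial.C t * F2 = y1 * Q3' - y0 * Q4' := by
      subst hF2 hQ3' hQ4'; ring
    rw [h]
    exact sub_mem (Ideal.mul_mem_left _ _ m3) (Ideal.mul_mem_left _ _ m4)
  have hG2m : G2 ∈ Ideal.span S := by
    apply cancel_C ht
    have h : MvPolynomial.C t * G2 =
        x0 * F1 - L3 * x1 * Q1' + A1 * Q2' + MvPolynomial.C t * (L2 * L3) * G1 := by
      subst hG2 hF1 hQ1' hQ2' hG1; ring
    rw [h]
    exact add_mem (add_mem (sub_mem (Ideal.mul_mem_left _ _ m6)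
      (Ideal.mul_mem_left _ _ m1)) (Ideal.mul_mem_left _ _ m2))
      (Ideal.mul_mem_left _ _ m5)
  have hHm : H ∈ Ideal.span S := by
    apply cancel_C ht
    have h : MvPolynomial.C t * H = x1 * F1 - L3 * x1 * Q3' + A1 * Q4' := by
      subst hH hF1 hQ3' hQ4'; ring
    rw [h]
    exact add_mem (sub_mem (Ideal.mul_mem_left _ _ m6) (Ideal.mul_mem_left _ _ m3))
      (Ideal.mul_mem_left _ _ m4)
  apply le_antisymm
  · rw [Ideal.span_le]
    intro p hp
    simp only [Set.mem_insert_iff, Set.mem_singleton_iff] at hp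
    rcases hp with h|h|h|h|h|h|h|h|h <;> subst h <;>
      first
        | exact m1 | exact m2 | exact m3 | exact m4 | exact m5 | exact m6
        | exact hF2m | exact hG2m | exact hHm
  · apply Ideal.span_mono
    intro p hp
    simp only [hS, Set.mem_insert_iff, Set.mem_singleton_iff] at hp ⊢
    tauto
end

section
/- With the notation of the deformed [420]a Pfaffian construction, if t ≠ 0 then for any polynomial Qg ∈ R the ideal of R generated by {A, B, C, Pf1, Pf5, Qg} equals the ideal generated by {A, B, C, Qg}; in particular the general fibre of the deformation of the [420]a family is generated by four quadrics. -/
/-- Deformed [420]a construction: over a field `k`, if `t ≠ 0` then for any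
polynomial `Qg` the ideal generated by `{A, B, C, Pf1, Pf5, Qg}` equals the
ideal generated by `{A, B, C, Qg}`; in particular the general fibre of the
deformation of the [420]a family is generated by four quadrics. -/
theorem stmt_7 {k : Type*} [Field k]
    (q1 q2 q3 Qg : MvPolynomial (Fin 6) k) (t : k) (ht : t ≠ 0)
    (x0 x1 x2 x3 x4 x5 A B C Pf1 Pf5 : MvPolynomial (Fin 6) k)
    (hx0 : x0 = MvPolynomial.X 0) (hx1 : x1 = MvPolynomial.X 1)
    (hx2 : x2 = MvPolynomial.X 2) (hx3 : x3 = MvPolynomial.X 3)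
    (hx4 : x4 = MvPolynomial.X 4) (hx5 : x5 = MvPolynomial.X 5)
    (hA : A = x1 * x5 - x2 * x4 + MvPolynomial.C t * q3)
    (hB : B = x0 * x5 - x2 * x3 + MvPolynomial.C t * q2)
    (hC : C = x0 * x4 - x1 * x3 + MvPolynomial.C t * q1)
    (hPf1 : Pf1 = x5 * q1 - x4 * q2 + x3 * q3)
    (hPf5 : Pf5 = x2 * q1 - x1 * q2 + x0 * q3) :
    Ideal.span {A, B, C, Pf1, Pf5, Qg} = Ideal.span {A, B, C, Qg} := by
  have key : (MvPolynomial.C t⁻¹ : MvPolynomial (Fin 6) k) * MvPolynomial.C t = 1 := by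
    rw [← map_mul, inv_mul_cancel₀ ht, map_one]
  have e1 : Pf1 = MvPolynomial.C t⁻¹ * x3 * A - MvPolynomial.C t⁻¹ * x4 * B +
      MvPolynomial.C t⁻¹ * x5 * C := by
    subst hA hB hC hPf1
    linear_combination (-(x5 * q1 - x4 * q2 + x3 * q3)) * key
  have e5 : Pf5 = MvPolynomial.C t⁻¹ * x0 * A - MvPolynomial.C t⁻¹ * x1 * B +
      MvPolynomial.C t⁻¹ * x2 * C := by
    subst hA hB hC hPf5
    linear_combination (-(x2 * q1 - x1 * q2 + x0 * q3)) * key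
  apply le_antisymm <;> rw [Ideal.span_le] <;>
    simp only [Set.insert_subset_iff, Set.singleton_subset_iff, SetLike.mem_coe]
  · have hAm : A ∈ Ideal.span {A, B, C, Qg} := Ideal.subset_span (by simp)
    have hBm : B ∈ Ideal.span {A, B, C, Qg} := Ideal.subset_span (by simp)
    have hCm : C ∈ Ideal.span {A, B, C, Qg} := Ideal.subset_span (by simp)
    have hQm : Qg ∈ Ideal.span {A, B, C, Qg} := Ideal.subset_span (by simp)
    refine ⟨hAm, hBm, hCm, ?_, ?_, hQm⟩
    · rw [e1]
      exact add_mem (sub_mem (Ideal.mul_mem_left _ _ hAm) (Ideal.mul_mem_left _ _ hBm))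
        (Ideal.mul_mem_left _ _ hCm)
    · rw [e5]
      exact add_mem (sub_mem (Ideal.mul_mem_left _ _ hAm) (Ideal.mul_mem_left _ _ hBm))
        (Ideal.mul_mem_left _ _ hCm)
  · exact ⟨Ideal.subset_span (by simp), Ideal.subset_span (by simp),
      Ideal.subset_span (by simp), Ideal.subset_span (by simp)⟩
end

section
/- With the notation of the rank-two fibre of the [430]a deformation over A^4, if t1 ≠ 0 and t2 ≠ 0 then the ideal of R generated by {Q1, Q2, Q3, Q4, F1, F2, F3} equals the ideal generated by the four quadratic generators {Q1, Q2, Q3, Q4} (i.e., F1, F2 and F3 are redundant, so the general fibre is a complete intersection of four quadrics). -/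
/-- Rank-two fibre of the [430]a deformation over `𝔸⁴`: over a field `k`, if
`t1 ≠ 0` and `t2 ≠ 0` then in `R = k[x0,x1,x2,y1,y2,z]` the ideal generated by
`{Q1, Q2, Q3, Q4, F1, F2, F3}` equals the ideal generated by the four
quadratic generators `{Q1, Q2, Q3, Q4}`. -/
theorem stmt_8 {k : Type*} [Field k]
    (A B C D P Q : MvPolynomial (Fin 6) k) (t1 t2 : k)
    (ht1 : t1 ≠ 0) (ht2 : t2 ≠ 0)
    (x0 x1 x2 y1 y2 z Q1 Q2 Q3 Q4 F1 F2 F3 : MvPolynomial (Fin 6) k)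
    (hx0 : x0 = MvPolynomial.X 0) (hx1 : x1 = MvPolynomial.X 1)
    (hx2 : x2 = MvPolynomial.X 2) (hy1 : y1 = MvPolynomial.X 3)
    (hy2 : y2 = MvPolynomial.X 4) (hz : z = MvPolynomial.X 5)
    (hQ1 : Q1 = z * y1 + Q * MvPolynomial.C t1 * MvPolynomial.C t2 +
      A * x0 * MvPolynomial.C t2 - C * x1 * MvPolynomial.C t1)
    (hQ2 : Q2 = z * y2 - P * MvPolynomial.C t1 * MvPolynomial.C t2 +
      A * x1 * MvPolynomial.C t2 - C * x2 * MvPolynomial.C t1)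
    (hQ3 : Q3 = x0 * y2 - x1 * y1 - MvPolynomial.C t1 * D)
    (hQ4 : Q4 = x1 * y2 - x2 * y1 - MvPolynomial.C t2 * B)
    (hF1 : F1 = A * (x0 * x2 - x1 ^ 2) - B * z +
      MvPolynomial.C t1 * (Q * x2 + P * x1))
    (hF2 : F2 = C * (x0 * x2 - x1 ^ 2) - D * z +
      MvPolynomial.C t2 * (Q * x1 + P * x0))
    (hF3 : F3 = A * D - B * C + P * y1 + Q * y2) :
    Ideal.span {Q1, Q2, Q3, Q4, F1, F2, F3} =
      Ideal.span {Q1, Q2, Q3, Q4} := by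
  have hQ1m : Q1 ∈ Ideal.span {Q1, Q2, Q3, Q4} :=
    Ideal.subset_span (by simp)
  have hQ2m : Q2 ∈ Ideal.span {Q1, Q2, Q3, Q4} :=
    Ideal.subset_span (by simp)
  have hQ3m : Q3 ∈ Ideal.span {Q1, Q2, Q3, Q4} :=
    Ideal.subset_span (by simp)
  have hQ4m : Q4 ∈ Ideal.span {Q1, Q2, Q3, Q4} :=
    Ideal.subset_span (by simp)
  have hc1 : (MvPolynomial.C t1 : MvPolynomial (Fin 6) k) ≠ 0 := by
    simpa using ht1
  have hc2 : (MvPolynomial.C t2 : MvPolynomial (Fin 6) k) ≠ 0 := by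
    simpa using ht2
  have hinv1 : (MvPolynomial.C t1⁻¹ : MvPolynomial (Fin 6) k) *
      MvPolynomial.C t1 = 1 := by
    rw [← MvPolynomial.C_mul, inv_mul_cancel₀ ht1, MvPolynomial.C_1]
  have hinv2 : (MvPolynomial.C t2⁻¹ : MvPolynomial (Fin 6) k) *
      MvPolynomial.C t2 = 1 := by
    rw [← MvPolynomial.C_mul, inv_mul_cancel₀ ht2, MvPolynomial.C_1]
  -- syzygies
  have s1 : MvPolynomial.C t2 * F1 = x2 * Q1 - x1 * Q2 + z * Q4 := by
    subst hQ1 hQ2 hQ4 hF1; ring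
  have s2 : MvPolynomial.C t1 * F2 = x1 * Q1 - x0 * Q2 + z * Q3 := by
    subst hQ1 hQ2 hQ3 hF2; ring
  have s3 : MvPolynomial.C t1 * (MvPolynomial.C t2 * F3) =
      y2 * Q1 - y1 * Q2 - (A * MvPolynomial.C t2) * Q3 +
        (C * MvPolynomial.C t1) * Q4 := by
    subst hQ1 hQ2 hQ3 hQ4 hF3; ring
  have hF1m : F1 ∈ Ideal.span {Q1, Q2, Q3, Q4} := by
    have : F1 = MvPolynomial.C t2⁻¹ * (x2 * Q1 - x1 * Q2 + z * Q4) := by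
      rw [← s1, ← mul_assoc, hinv2, one_mul]
    rw [this]
    exact Ideal.mul_mem_left _ _ (add_mem (sub_mem
      (Ideal.mul_mem_left _ _ hQ1m) (Ideal.mul_mem_left _ _ hQ2m))
      (Ideal.mul_mem_left _ _ hQ4m))
  have hF2m : F2 ∈ Ideal.span {Q1, Q2, Q3, Q4} := by
    have : F2 = MvPolynomial.C t1⁻¹ * (x1 * Q1 - x0 * Q2 + z * Q3) := by
      rw [← s2, ← mul_assoc, hinv1, one_mul]
    rw [this]
    exact Ideal.mul_mem_left _ _ (add_mem (sub_mem
      (Ideal.mul_mem_left _ _ hQ1m) (Ideal.mul_mem_left _ _ hQ2m))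
      (Ideal.mul_mem_left _ _ hQ3m))
  have hF3m : F3 ∈ Ideal.span {Q1, Q2, Q3, Q4} := by
    have : F3 = MvPolynomial.C t1⁻¹ * (MvPolynomial.C t2⁻¹ *
        (y2 * Q1 - y1 * Q2 - (A * MvPolynomial.C t2) * Q3 +
          (C * MvPolynomial.C t1) * Q4)) := by
      rw [← s3]
      rw [show (MvPolynomial.C t1⁻¹ : MvPolynomial (Fin 6) k) *
        (MvPolynomial.C t2⁻¹ * (MvPolynomial.C t1 * (MvPolynomial.C t2 * F3)))
        = (MvPolynomial.C t1⁻¹ * MvPolynomial.C t1) *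
          ((MvPolynomial.C t2⁻¹ * MvPolynomial.C t2) * F3) by ring,
        hinv1, hinv2, one_mul, one_mul]
    rw [this]
    exact Ideal.mul_mem_left _ _ (Ideal.mul_mem_left _ _
      (add_mem (sub_mem (sub_mem (Ideal.mul_mem_left _ _ hQ1m)
        (Ideal.mul_mem_left _ _ hQ2m)) (Ideal.mul_mem_left _ _ hQ3m))
        (Ideal.mul_mem_left _ _ hQ4m)))
  apply le_antisymm
  · rw [Ideal.span_le]
    intro f hf
    simp only [Set.mem_insert_iff, Set.mem_singleton_iff] at hf
    rcases hf with rfl | rfl | rfl | rfl | rfl | rfl | rfl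
    exacts [hQ1m, hQ2m, hQ3m, hQ4m, hF1m, hF2m, hF3m]
  · exact Ideal.span_mono (by intro f hf; simp only [Set.mem_insert_iff,
      Set.mem_singleton_iff] at hf ⊢; tauto)
end

section
/- With the notation of the rank-one fibre of the [430]a deformation, define the five polynomials P1 = x2·y1 − x1·y2, P2 = t1·(P·y1 + Q·y2 − C·B) + A·(x0·y2 − x1·y1), P3 = −z·B + t1·(Q·x2 + P·x1) + A·(x0·x2 − x1²), P4 = z·y2 − t1·C·x2, P5 = z·y1 − t1·C·x1 (these are the five 4×4 Pfaffians of the 5×5 skew-symmetric matrix with upper-triangular entries m12 = z, m13 = t1·C, m14 = −t1·Q − x0·A, m15 = t1·P − x1·A, m23 = 0, m24 = x1, m25 = x2, m34 = y1, m35 = y2, m45 = −B). If t1 ≠ 0, then the ideal of R generated by {Q1, Q2, Q3, Q4, F1, F2, F3} equals the ideal generated by {Q3, P1, P2, P3, P4, P5}; in particular the rank-one fibre is defined by five Pfaffians and one additional quadric. -/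
/-- Rank-one fibre of the [430]a deformation: over a field `k`, if `t1 ≠ 0`
then the ideal generated by `{Q1, Q2, Q3, Q4, F1, F2, F3}` equals the ideal
generated by `{Q3, P1, P2, P3, P4, P5}`, where `P1, …, P5` are the five
`4 × 4` Pfaffians of the given `5 × 5` skew-symmetric matrix; in particular
the rank-one fibre is defined by five Pfaffians and one additional quadric. -/
theorem stmt_10 {k : Type*} [Field k]
    (A B C D P Q : MvPolynomial (Fin 6) k) (t1 : k) (ht1 : t1 ≠ 0)
    (x0 x1 x2 y1 y2 z Q1 Q2 Q3 Q4 F1 F2 F3 P1 P2 P3 P4 P5 :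
      MvPolynomial (Fin 6) k)
    (hx0 : x0 = MvPolynomial.X 0) (hx1 : x1 = MvPolynomial.X 1)
    (hx2 : x2 = MvPolynomial.X 2) (hy1 : y1 = MvPolynomial.X 3)
    (hy2 : y2 = MvPolynomial.X 4) (hz : z = MvPolynomial.X 5)
    (hQ1 : Q1 = z * y1 - MvPolynomial.C t1 * C * x1)
    (hQ2 : Q2 = z * y2 - MvPolynomial.C t1 * C * x2)
    (hQ3 : Q3 = x0 * y2 - x1 * y1 - MvPolynomial.C t1 * D)
    (hQ4 : Q4 = x1 * y2 - x2 * y1)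
    (hF1 : F1 = A * (x0 * x2 - x1 ^ 2) - B * z +
      MvPolynomial.C t1 * (Q * x2 + P * x1))
    (hF2 : F2 = C * (x0 * x2 - x1 ^ 2) - D * z)
    (hF3 : F3 = A * D - B * C + P * y1 + Q * y2)
    (hP1 : P1 = x2 * y1 - x1 * y2)
    (hP2 : P2 = MvPolynomial.C t1 * (P * y1 + Q * y2 - C * B) +
      A * (x0 * y2 - x1 * y1))
    (hP3 : P3 = -(z * B) + MvPolynomial.C t1 * (Q * x2 + P * x1) +
      A * (x0 * x2 - x1 ^ 2))
    (hP4 : P4 = z * y2 - MvPolynomial.C t1 * C * x2)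
    (hP5 : P5 = z * y1 - MvPolynomial.C t1 * C * x1) :
    Ideal.span {Q1, Q2, Q3, Q4, F1, F2, F3} =
      Ideal.span {Q3, P1, P2, P3, P4, P5} := by

  have hC : (MvPolynomial.C t1⁻¹ : MvPolynomial (Fin 6) k) * MvPolynomial.C t1 = 1 := by
    rw [← MvPolynomial.C_mul, inv_mul_cancel₀ ht1, MvPolynomial.C_1]
  have e1 : Q1 = P5 := by rw [hQ1, hP5]
  have e2 : Q2 = P4 := by rw [hQ2, hP4]
  have e4 : Q4 = -P1 := by rw [hQ4, hP1]; ring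
  have eF1 : F1 = P3 := by rw [hF1, hP3]; ring
  have eF2 : F2 = MvPolynomial.C t1⁻¹ * (z * Q3 - x0 * Q2 + x1 * Q1) := by
    have h : MvPolynomial.C t1 * F2 = z * Q3 - x0 * Q2 + x1 * Q1 := by
      rw [hF2, hQ3, hQ2, hQ1]; ring
    calc F2 = (MvPolynomial.C t1⁻¹ * MvPolynomial.C t1) * F2 := by rw [hC, one_mul]
      _ = MvPolynomial.C t1⁻¹ * (MvPolynomial.C t1 * F2) := by ring
      _ = _ := by rw [h]
  have eF3 : F3 = MvPolynomial.C t1⁻¹ * (P2 - A * Q3) := by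
    have h : MvPolynomial.C t1 * F3 = P2 - A * Q3 := by
      rw [hF3, hP2, hQ3]; ring
    calc F3 = (MvPolynomial.C t1⁻¹ * MvPolynomial.C t1) * F3 := by rw [hC, one_mul]
      _ = MvPolynomial.C t1⁻¹ * (MvPolynomial.C t1 * F3) := by ring
      _ = _ := by rw [h]
  apply le_antisymm
  · rw [Ideal.span_le]
    have mQ3 : Q3 ∈ Ideal.span ({Q3, P1, P2, P3, P4, P5} : Set (MvPolynomial (Fin 6) k)) :=
      Ideal.subset_span (by simp)
    have mP1 : P1 ∈ Ideal.span ({Q3, P1, P2, P3, P4, P5} : Set (MvPolynomial (Fin 6) k)) :=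
      Ideal.subset_span (by simp)
    have mP2 : P2 ∈ Ideal.span ({Q3, P1, P2, P3, P4, P5} : Set (MvPolynomial (Fin 6) k)) :=
      Ideal.subset_span (by simp)
    have mP3 : P3 ∈ Ideal.span ({Q3, P1, P2, P3, P4, P5} : Set (MvPolynomial (Fin 6) k)) :=
      Ideal.subset_span (by simp)
    have mP4 : P4 ∈ Ideal.span ({Q3, P1, P2, P3, P4, P5} : Set (MvPolynomial (Fin 6) k)) :=
      Ideal.subset_span (by simp)
    have mP5 : P5 ∈ Ideal.span ({Q3, P1, P2, P3, P4, P5} : Set (MvPolynomial (Fin 6) k)) :=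
      Ideal.subset_span (by simp)
    intro g hg
    simp only [Set.mem_insert_iff, Set.mem_singleton_iff] at hg
    rcases hg with rfl | rfl | rfl | rfl | rfl | rfl | rfl
    · rw [e1]; exact mP5
    · rw [e2]; exact mP4
    · exact mQ3
    · rw [e4]; exact neg_mem mP1
    · rw [eF1]; exact mP3
    · rw [eF2, e1, e2]
      exact Ideal.mul_mem_left _ _ (add_mem (sub_mem (Ideal.mul_mem_left _ _ mQ3)
        (Ideal.mul_mem_left _ _ mP4)) (Ideal.mul_mem_left _ _ mP5))
    · rw [eF3]
      exact Ideal.mul_mem_left _ _ (sub_mem mP2 (Ideal.mul_mem_left _ _ mQ3))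
  · rw [Ideal.span_le]
    have mQ1 : Q1 ∈ Ideal.span ({Q1, Q2, Q3, Q4, F1, F2, F3} : Set (MvPolynomial (Fin 6) k)) :=
      Ideal.subset_span (by simp)
    have mQ2 : Q2 ∈ Ideal.span ({Q1, Q2, Q3, Q4, F1, F2, F3} : Set (MvPolynomial (Fin 6) k)) :=
      Ideal.subset_span (by simp)
    have mQ3 : Q3 ∈ Ideal.span ({Q1, Q2, Q3, Q4, F1, F2, F3} : Set (MvPolynomial (Fin 6) k)) :=
      Ideal.subset_span (by simp)
    have mQ4 : Q4 ∈ Ideal.span ({Q1, Q2, Q3, Q4, F1, F2, F3} : Set (MvPolynomial (Fin 6) k)) :=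
      Ideal.subset_span (by simp)
    have mF1 : F1 ∈ Ideal.span ({Q1, Q2, Q3, Q4, F1, F2, F3} : Set (MvPolynomial (Fin 6) k)) :=
      Ideal.subset_span (by simp)
    have mF3 : F3 ∈ Ideal.span ({Q1, Q2, Q3, Q4, F1, F2, F3} : Set (MvPolynomial (Fin 6) k)) :=
      Ideal.subset_span (by simp)
    intro g hg
    simp only [Set.mem_insert_iff, Set.mem_singleton_iff] at hg
    rcases hg with rfl | rfl | rfl | rfl | rfl | rfl
    · exact mQ3
    · have h : Q4 = -(x2 * y1 - x1 * y2) := by rw [hQ4]; ring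
      have : (x2 * y1 - x1 * y2 : MvPolynomial (Fin 6) k) = -Q4 := by rw [h]; ring
      rw [hP1, this]; exact neg_mem mQ4
    · have : MvPolynomial.C t1 * (P * y1 + Q * y2 - C * B) + A * (x0 * y2 - x1 * y1)
          = MvPolynomial.C t1 * F3 + A * Q3 := by rw [hF3, hQ3]; ring
      rw [hP2, this]
      exact add_mem (Ideal.mul_mem_left _ _ mF3) (Ideal.mul_mem_left _ _ mQ3)
    · rw [← eF1]; exact mF1
    · rw [← e2]; exact mQ2
    · rw [← e1]; exact mQ1
end

section
/- With the notation of the [441a]aii deformation, if t ≠ 0 then the ideal of R generated by {Q0', Q1, Q2, Pf1, Pf2, Pf3, Pf4, Pf5', q} equals the ideal generated by {Q0', Q1, Q2, Pf1, Pf3, Pf5'} (i.e., for t invertible the generators Pf2, Pf4 and the quartic q are redundant, and the remaining generators define a curve of Type [420]ai). -/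
/-- [441a]aii deformation: over a field `k`, if `t ≠ 0` then the ideal
generated by `{Q0', Q1, Q2, Pf1, Pf2, Pf3, Pf4, Pf5', q}` equals the ideal
generated by `{Q0', Q1, Q2, Pf1, Pf3, Pf5'}`, i.e. for `t` invertible the
generators `Pf2`, `Pf4` and the quartic `q` are redundant, the remaining
generators defining a curve of Type [420]ai. -/
theorem stmt_13 {k : Type*} [Field k]
    (b c d0 d1 d2 : MvPolynomial (Fin 6) k) (t : k) (ht : t ≠ 0)
    (x0 x1 x2 x3 x4 y d Q0' Q1 Q2 Pf1 Pf2 Pf3 Pf4 Pf5' q :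
      MvPolynomial (Fin 6) k)
    (hx0 : x0 = MvPolynomial.X 0) (hx1 : x1 = MvPolynomial.X 1)
    (hx2 : x2 = MvPolynomial.X 2) (hx3 : x3 = MvPolynomial.X 3)
    (hx4 : x4 = MvPolynomial.X 4) (hy : y = MvPolynomial.X 5)
    (hd : d = d0 * x0 + d1 * x1 + d2 * x2)
    (hQ0' : Q0' = x0 * y + MvPolynomial.C t * c)
    (hQ1 : Q1 = x1 * y) (hQ2 : Q2 = x2 * y)
    (hPf1 : Pf1 = x0 * x1 + x2 * x3)
    (hPf2 : Pf2 = x2 * c)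
    (hPf3 : Pf3 = x2 * b - x1 * d)
    (hPf4 : Pf4 = -(x1 * c))
    (hPf5' : Pf5' = x0 * b + x3 * d - MvPolynomial.C t * y * c)
    (hq : q = b * c + x3 * c * d0 + c * y ^ 2) :
    Ideal.span {Q0', Q1, Q2, Pf1, Pf2, Pf3, Pf4, Pf5', q} =
      Ideal.span {Q0', Q1, Q2, Pf1, Pf3, Pf5'} := by
  set I := Ideal.span {Q0', Q1, Q2, Pf1, Pf3, Pf5'} with hI
  have hti : (MvPolynomial.C t⁻¹ : MvPolynomial (Fin 6) k) * MvPolynomial.C t = 1 := by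
    rw [← MvPolynomial.C_mul, inv_mul_cancel₀ ht, MvPolynomial.C_1]
  have mQ0 : Q0' ∈ I := Ideal.subset_span (by simp)
  have mQ1 : Q1 ∈ I := Ideal.subset_span (by simp)
  have mQ2 : Q2 ∈ I := Ideal.subset_span (by simp)
  have mPf1 : Pf1 ∈ I := Ideal.subset_span (by simp)
  have mPf3 : Pf3 ∈ I := Ideal.subset_span (by simp)
  have mPf5 : Pf5' ∈ I := Ideal.subset_span (by simp)
  have mPf2 : Pf2 ∈ I := by
    have h2 : Pf2 = MvPolynomial.C t⁻¹ * (x2 * Q0' - x0 * Q2) := by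
      subst hPf2 hQ0' hQ2
      linear_combination (-(x2 * c)) * hti
    rw [h2]
    exact I.mul_mem_left _ (I.sub_mem (I.mul_mem_left _ mQ0) (I.mul_mem_left _ mQ2))
  have mPf4 : Pf4 ∈ I := by
    have h4 : Pf4 = MvPolynomial.C t⁻¹ * (x0 * Q1 - x1 * Q0') := by
      subst hPf4 hQ0' hQ1
      linear_combination (x1 * c) * hti
    rw [h4]
    exact I.mul_mem_left _ (I.sub_mem (I.mul_mem_left _ mQ1) (I.mul_mem_left _ mQ0))
  have mq : q ∈ I := by
    have hq' : q = MvPolynomial.C t⁻¹ *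
        ((b + x3 * d0) * Q0' + x3 * d1 * Q1 + x3 * d2 * Q2 - y * Pf5') := by
      subst hq hQ0' hQ1 hQ2 hPf5' hd
      linear_combination (-(b * c + x3 * c * d0 + c * y ^ 2)) * hti
    rw [hq']
    exact I.mul_mem_left _ (I.sub_mem (I.add_mem (I.add_mem
      (I.mul_mem_left _ mQ0) (I.mul_mem_left _ mQ1)) (I.mul_mem_left _ mQ2))
      (I.mul_mem_left _ mPf5))
  apply le_antisymm
  · rw [Ideal.span_le]
    intro x hx
    simp only [Set.mem_insert_iff, Set.mem_singleton_iff] at hx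
    rcases hx with h|h|h|h|h|h|h|h|h <;> subst h <;> assumption
  · exact Ideal.span_mono (by intro x hx; simp only [Set.mem_insert_iff,
      Set.mem_singleton_iff] at hx ⊢; tauto)
end

section
/- With the notation of the [441b]ai deformation, if t ≠ 0 then the ideal of R generated by {Q1', Q2', Q3', Q4', F1, F2, G1, G2, H} equals the ideal generated by {Q1', Q2', Q3', Q4'} (i.e., the general fibre of the deformation of the [441b]ai family is a complete intersection of four quadrics). -/
/-- [441b]ai deformation: over a field `k`, if `t ≠ 0` then the ideal
generated by `{Q1', Q2', Q3', Q4', F1, F2, G1, G2, H}` equals the ideal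
generated by `{Q1', Q2', Q3', Q4'}`, i.e. the general fibre is a complete
intersection of four quadrics. -/
theorem stmt_15 {k : Type*} [Field k]
    (A B C D : MvPolynomial (Fin 6) k) (t : k) (ht : t ≠ 0)
    (x0 x1 y0 y1 z0 z1 Q1' Q2' Q3' Q4' F1 F2 G1 G2 H : MvPolynomial (Fin 6) k)
    (hx0 : x0 = MvPolynomial.X 0) (hx1 : x1 = MvPolynomial.X 1)
    (hy0 : y0 = MvPolynomial.X 2) (hy1 : y1 = MvPolynomial.X 3)
    (hz0 : z0 = MvPolynomial.X 4) (hz1 : z1 = MvPolynomial.X 5)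
    (hQ1' : Q1' = x0 * y0 + MvPolynomial.C t * D)
    (hQ2' : Q2' = x0 * y1 + MvPolynomial.C t * B)
    (hQ3' : Q3' = x1 * y0 + MvPolynomial.C t * C)
    (hQ4' : Q4' = x1 * y1 + MvPolynomial.C t * A)
    (hF1 : F1 = x0 * A - x1 * B) (hF2 : F2 = x0 * C - x1 * D)
    (hG1 : G1 = y0 * A - y1 * C) (hG2 : G2 = y0 * B - y1 * D)
    (hH : H = A * D - B * C) :
    Ideal.span {Q1', Q2', Q3', Q4', F1, F2, G1, G2, H} =
      Ideal.span {Q1', Q2', Q3', Q4'} := by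
  have htt : (MvPolynomial.C t⁻¹ * MvPolynomial.C t : MvPolynomial (Fin 6) k) = 1 := by
    rw [← MvPolynomial.C_mul, inv_mul_cancel₀ ht, MvPolynomial.C_1]
  set u : MvPolynomial (Fin 6) k := MvPolynomial.C t⁻¹ with hu
  have h1 : Q1' ∈ Ideal.span {Q1', Q2', Q3', Q4'} := Ideal.subset_span (by simp)
  have h2 : Q2' ∈ Ideal.span {Q1', Q2', Q3', Q4'} := Ideal.subset_span (by simp)
  have h3 : Q3' ∈ Ideal.span {Q1', Q2', Q3', Q4'} := Ideal.subset_span (by simp)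
  have h4 : Q4' ∈ Ideal.span {Q1', Q2', Q3', Q4'} := Ideal.subset_span (by simp)
  apply le_antisymm
  · rw [Ideal.span_le]
    intro p hp
    simp only [Set.mem_insert_iff, Set.mem_singleton_iff] at hp
    rcases hp with rfl | rfl | rfl | rfl | rfl | rfl | rfl | rfl | rfl
    · exact h1
    · exact h2
    · exact h3
    · exact h4
    · have hp : p = u * x0 * Q4' - u * x1 * Q2' := by
        rw [hF1, hQ2', hQ4']
        linear_combination (x1 * B - x0 * A) * htt
      rw [hp]
      exact Ideal.sub_mem _ (Ideal.mul_mem_left _ _ h4) (Ideal.mul_mem_left _ _ h2)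
    · have hp : p = u * x0 * Q3' - u * x1 * Q1' := by
        rw [hF2, hQ1', hQ3']
        linear_combination (x1 * D - x0 * C) * htt
      rw [hp]
      exact Ideal.sub_mem _ (Ideal.mul_mem_left _ _ h3) (Ideal.mul_mem_left _ _ h1)
    · have hp : p = u * y0 * Q4' - u * y1 * Q3' := by
        rw [hG1, hQ3', hQ4']
        linear_combination (y1 * C - y0 * A) * htt
      rw [hp]
      exact Ideal.sub_mem _ (Ideal.mul_mem_left _ _ h4) (Ideal.mul_mem_left _ _ h3)
    · have hp : p = u * y0 * Q2' - u * y1 * Q1' := by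
        rw [hG2, hQ1', hQ2']
        linear_combination (y1 * D - y0 * B) * htt
      rw [hp]
      exact Ideal.sub_mem _ (Ideal.mul_mem_left _ _ h2) (Ideal.mul_mem_left _ _ h1)
    · have key : MvPolynomial.C t * (MvPolynomial.C t * (MvPolynomial.C t * p)) =
          (MvPolynomial.C t * Q1' - MvPolynomial.C t * (x0 * y0)) * Q4'
            + (MvPolynomial.C t * (x1 * y0) - MvPolynomial.C t * Q3') * Q2'
            + (MvPolynomial.C t * (x0 * y1)) * Q3' - (MvPolynomial.C t * (x1 * y1)) * Q1' := by
        rw [hH, hQ1', hQ2', hQ3', hQ4']; ring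
      have h3u : u * u * u * (MvPolynomial.C t * (MvPolynomial.C t * (MvPolynomial.C t * p))) = p := by
        calc u * u * u * (MvPolynomial.C t * (MvPolynomial.C t * (MvPolynomial.C t * p)))
            = (u * MvPolynomial.C t) * ((u * MvPolynomial.C t) * ((u * MvPolynomial.C t) * p)) := by ring
          _ = p := by rw [htt]; ring
      rw [← h3u, key]
      refine Ideal.mul_mem_left _ _ ?_
      exact Ideal.sub_mem _ (Ideal.add_mem _ (Ideal.add_mem _ (Ideal.mul_mem_left _ _ h4)
        (Ideal.mul_mem_left _ _ h2)) (Ideal.mul_mem_left _ _ h3)) (Ideal.mul_mem_left _ _ h1)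
  · rw [Ideal.span_le]
    intro p hp
    simp only [Set.mem_insert_iff, Set.mem_singleton_iff] at hp
    apply Ideal.subset_span
    rcases hp with rfl | rfl | rfl | rfl <;> simp
end

section
/- With the notation of the [441b]aii deformation, the identities t·F4 = y1·Q3' − y0·Q4' and t·H = x0·F3' + B·Q3' − D·Q4' hold in R for every t ∈ k. Moreover, if k is a field and t ≠ 0, then the ideal of R generated by {Q1, Q2, Q3', Q4', F1', F2', F3', F4, H} equals the ideal generated by {Q1, Q2, Q3', Q4', F1', F2', F3'} (i.e., for t invertible the generators F4 and H are redundant). -/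
/-- [441b]aii deformation: over a commutative ring `k`, in
`R = k[x0,x1,y0,y1,z0,z1]`, the identities `t·F4 = y1·Q3' − y0·Q4'` and
`t·H = x0·F3' + B·Q3' − D·Q4'` hold for every `t ∈ k`; moreover, if `k` is a
field and `t ≠ 0`, then the ideal generated by
`{Q1, Q2, Q3', Q4', F1', F2', F3', F4, H}` equals the ideal generated by
`{Q1, Q2, Q3', Q4', F1', F2', F3'}`. -/
theorem stmt_16 {k : Type*} [CommRing k]
    (B D a b c d : MvPolynomial (Fin 6) k) (t : k)
    (x0 x1 y0 y1 z0 z1 Q1 Q2 Q3' Q4' F1' F2' F3' F4 H :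
      MvPolynomial (Fin 6) k)
    (hx0 : x0 = MvPolynomial.X 0) (hx1 : x1 = MvPolynomial.X 1)
    (hy0 : y0 = MvPolynomial.X 2) (hy1 : y1 = MvPolynomial.X 3)
    (hz0 : z0 = MvPolynomial.X 4) (hz1 : z1 = MvPolynomial.X 5)
    (hQ1 : Q1 = x1 * y1) (hQ2 : Q2 = x1 * y0)
    (hQ3' : Q3' = x0 * y0 - MvPolynomial.C t * b * y1)
    (hQ4' : Q4' = x0 * y1 - MvPolynomial.C t * d * y0)
    (hF1' : F1' = B * x1 - a * (x0 ^ 2 - MvPolynomial.C t ^ 2 * b * d))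
    (hF2' : F2' = D * x1 - c * (x0 ^ 2 - MvPolynomial.C t ^ 2 * b * d))
    (hF3' : F3' = D * (y1 + MvPolynomial.C t * a) -
      B * (y0 + MvPolynomial.C t * c))
    (hF4 : F4 = y0 ^ 2 * d - y1 ^ 2 * b)
    (hH : H = D * (x0 * a + y0 * d) - B * (x0 * c + y1 * b)) :
    MvPolynomial.C t * F4 = y1 * Q3' - y0 * Q4' ∧
    MvPolynomial.C t * H = x0 * F3' + B * Q3' - D * Q4' ∧
    (IsField k → t ≠ 0 →
      Ideal.span {Q1, Q2, Q3', Q4', F1', F2', F3', F4, H} =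
        Ideal.span {Q1, Q2, Q3', Q4', F1', F2', F3'}) := by
  have h1 : MvPolynomial.C t * F4 = y1 * Q3' - y0 * Q4' := by
    subst hF4 hQ3' hQ4'; ring
  have h2 : MvPolynomial.C t * H = x0 * F3' + B * Q3' - D * Q4' := by
    subst hH hF3' hQ3' hQ4'; ring
  refine ⟨h1, h2, fun hk ht => ?_⟩
  letI := hk.toField
  have hunit : IsUnit (MvPolynomial.C t : MvPolynomial (Fin 6) k) :=
    (Ne.isUnit ht).map MvPolynomial.C
  apply le_antisymm
  · rw [Ideal.span_le]
    intro p hp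
    simp only [Set.mem_insert_iff, Set.mem_singleton_iff] at hp
    have mem : ∀ q ∈ ({Q1, Q2, Q3', Q4', F1', F2', F3'} :
        Set (MvPolynomial (Fin 6) k)),
        q ∈ Ideal.span {Q1, Q2, Q3', Q4', F1', F2', F3'} :=
      fun q hq => Ideal.subset_span hq
    have hQ3m := mem Q3' (by simp)
    have hQ4m := mem Q4' (by simp)
    have hF3m := mem F3' (by simp)
    have hF4m : F4 ∈ Ideal.span {Q1, Q2, Q3', Q4', F1', F2', F3'} := by
      have : MvPolynomial.C t * F4 ∈
          Ideal.span {Q1, Q2, Q3', Q4', F1', F2', F3'} := by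
        rw [h1]; exact Ideal.sub_mem _ (Ideal.mul_mem_left _ _ hQ3m)
          (Ideal.mul_mem_left _ _ hQ4m)
      rcases hunit with ⟨u, hu⟩
      have := Ideal.mul_mem_left _ (↑u⁻¹ : MvPolynomial (Fin 6) k) this
      rwa [← mul_assoc, ← hu, u.inv_mul, one_mul] at this
    have hHm : H ∈ Ideal.span {Q1, Q2, Q3', Q4', F1', F2', F3'} := by
      have : MvPolynomial.C t * H ∈
          Ideal.span {Q1, Q2, Q3', Q4', F1', F2', F3'} := by
        rw [h2]
        exact Ideal.sub_mem _ (Ideal.add_mem _ (Ideal.mul_mem_left _ _ hF3m)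
          (Ideal.mul_mem_left _ _ hQ3m)) (Ideal.mul_mem_left _ _ hQ4m)
      rcases hunit with ⟨u, hu⟩
      have := Ideal.mul_mem_left _ (↑u⁻¹ : MvPolynomial (Fin 6) k) this
      rwa [← mul_assoc, ← hu, u.inv_mul, one_mul] at this
    rcases hp with h|h|h|h|h|h|h|h|h <;> subst h
    · exact mem _ (by simp)
    · exact mem _ (by simp)
    · exact hQ3m
    · exact hQ4m
    · exact mem _ (by simp)
    · exact mem _ (by simp)
    · exact hF3m
    · exact hF4m
    · exact hHm
  · apply Ideal.span_mono
    intro q hq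
    simp only [Set.mem_insert_iff, Set.mem_singleton_iff] at hq ⊢
    tauto
end

section
/- With the notation of the [331]ai deformation, the following identities hold in R for every t ∈ k: (i) t·Pf6 = x1·Q0' − x0·Q1'; (ii) t·Pf5 = x2·Q0' − x0·Q2'; (iii) t·Pf4 = x2·Q1' − x1·Q2'; (iv) t·H = a0·Pf2345·Q0' − b1·Pf1345·Q1' − y·Pf7. Consequently, if k is a field and t ≠ 0, then the ideal of R generated by {Q0', Q1', Q2', Pf4, Pf5, Pf6, Pf7, H} equals the ideal generated by {Q0', Q1', Q2', Pf7}. -/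
/-- Identities in the [331]ai deformation: over a commutative ring `k`, in
`R = k[x0,…,x12,y]`, for every `t ∈ k` we have
`t·Pf6 = x1·Q0' − x0·Q1'`, `t·Pf5 = x2·Q0' − x0·Q2'`,
`t·Pf4 = x2·Q1' − x1·Q2'`,
`t·H = a0·Pf2345·Q0' − b1·Pf1345·Q1' − y·Pf7`;
consequently, if `k` is a field and `t ≠ 0`, the ideal generated by
`{Q0', Q1', Q2', Pf4, Pf5, Pf6, Pf7, H}` equals the ideal generated by
`{Q0', Q1', Q2', Pf7}`. -/
theorem stmt_18 {k : Type*} [CommRing k]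
    (a0 b1 t : k)
    (x0 x1 x2 x3 x4 x5 x6 x7 x8 x9 x10 x11 x12 y
      Pf1234 Pf1235 Pf1236 Pf2345 Pf1345
      Q0' Q1' Q2' Pf4 Pf5 Pf6 Pf7 H : MvPolynomial (Fin 14) k)
    (hx0 : x0 = MvPolynomial.X 0) (hx1 : x1 = MvPolynomial.X 1)
    (hx2 : x2 = MvPolynomial.X 2) (hx3 : x3 = MvPolynomial.X 3)
    (hx4 : x4 = MvPolynomial.X 4) (hx5 : x5 = MvPolynomial.X 5)
    (hx6 : x6 = MvPolynomial.X 6) (hx7 : x7 = MvPolynomial.X 7)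
    (hx8 : x8 = MvPolynomial.X 8) (hx9 : x9 = MvPolynomial.X 9)
    (hx10 : x10 = MvPolynomial.X 10) (hx11 : x11 = MvPolynomial.X 11)
    (hx12 : x12 = MvPolynomial.X 12) (hy : y = MvPolynomial.X 13)
    (hPf1234 : Pf1234 = x3 * x8 - x4 * x7 + x5 * x6)
    (hPf1235 : Pf1235 = x3 * x11 - x4 * x10 + x5 * x9)
    (hPf1236 : Pf1236 = MvPolynomial.C b1 * x1 * x4 - MvPolynomial.C a0 * x0 * x5)
    (hPf2345 : Pf2345 = x5 * x12 - x7 * x11 + x8 * x10)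
    (hPf1345 : Pf1345 = x4 * x12 - x6 * x11 + x8 * x9)
    (hQ0' : Q0' = x0 * y + MvPolynomial.C t * Pf1234)
    (hQ1' : Q1' = x1 * y + MvPolynomial.C t * Pf1235)
    (hQ2' : Q2' = x2 * y - MvPolynomial.C t * Pf1236)
    (hPf6 : Pf6 = x1 * Pf1234 - x0 * Pf1235)
    (hPf5 : Pf5 = x0 * Pf1236 + x2 * Pf1234)
    (hPf4 : Pf4 = x1 * Pf1236 + x2 * Pf1235)
    (hPf7 : Pf7 = MvPolynomial.C a0 * x0 * Pf2345 - MvPolynomial.C b1 * x1 * Pf1345)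
    (hH : H = MvPolynomial.C a0 * Pf1234 * Pf2345 -
      MvPolynomial.C b1 * Pf1345 * Pf1235) :
    MvPolynomial.C t * Pf6 = x1 * Q0' - x0 * Q1' ∧
    MvPolynomial.C t * Pf5 = x2 * Q0' - x0 * Q2' ∧
    MvPolynomial.C t * Pf4 = x2 * Q1' - x1 * Q2' ∧
    MvPolynomial.C t * H =
      MvPolynomial.C a0 * Pf2345 * Q0' - MvPolynomial.C b1 * Pf1345 * Q1' -
        y * Pf7 ∧
    (IsField k → t ≠ 0 →
      Ideal.span {Q0', Q1', Q2', Pf4, Pf5, Pf6, Pf7, H} =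
        Ideal.span {Q0', Q1', Q2', Pf7}) := by

  subst hQ0' hQ1' hQ2' hPf6 hPf5 hPf4 hPf7 hH hPf1236
  have h1 : MvPolynomial.C t * (x1 * Pf1234 - x0 * Pf1235) =
      x1 * (x0 * y + MvPolynomial.C t * Pf1234) -
      x0 * (x1 * y + MvPolynomial.C t * Pf1235) := by ring
  have h2 : MvPolynomial.C t *
      (x0 * (MvPolynomial.C b1 * x1 * x4 - MvPolynomial.C a0 * x0 * x5) + x2 * Pf1234) =
      x2 * (x0 * y + MvPolynomial.C t * Pf1234) -
      x0 * (x2 * y - MvPolynomial.C t *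
        (MvPolynomial.C b1 * x1 * x4 - MvPolynomial.C a0 * x0 * x5)) := by ring
  have h3 : MvPolynomial.C t *
      (x1 * (MvPolynomial.C b1 * x1 * x4 - MvPolynomial.C a0 * x0 * x5) + x2 * Pf1235) =
      x2 * (x1 * y + MvPolynomial.C t * Pf1235) -
      x1 * (x2 * y - MvPolynomial.C t *
        (MvPolynomial.C b1 * x1 * x4 - MvPolynomial.C a0 * x0 * x5)) := by ring
  have h4 : MvPolynomial.C t *
      (MvPolynomial.C a0 * Pf1234 * Pf2345 - MvPolynomial.C b1 * Pf1345 * Pf1235) =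
      MvPolynomial.C a0 * Pf2345 * (x0 * y + MvPolynomial.C t * Pf1234) -
      MvPolynomial.C b1 * Pf1345 * (x1 * y + MvPolynomial.C t * Pf1235) -
      y * (MvPolynomial.C a0 * x0 * Pf2345 - MvPolynomial.C b1 * x1 * Pf1345) := by ring
  refine ⟨h1, h2, h3, h4, fun hk ht => ?_⟩
  obtain ⟨u, hu⟩ := hk.mul_inv_cancel ht
  apply le_antisymm
  · rw [Ideal.span_le]
    set S : Set (MvPolynomial (Fin 14) k) := {x0 * y + MvPolynomial.C t * Pf1234,
      x1 * y + MvPolynomial.C t * Pf1235,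
      x2 * y - MvPolynomial.C t * (MvPolynomial.C b1 * x1 * x4 - MvPolynomial.C a0 * x0 * x5),
      MvPolynomial.C a0 * x0 * Pf2345 - MvPolynomial.C b1 * x1 * Pf1345} with hS
    have mQ0 : (x0 * y + MvPolynomial.C t * Pf1234) ∈ Ideal.span S :=
      Ideal.subset_span (by simp [hS])
    have mQ1 : (x1 * y + MvPolynomial.C t * Pf1235) ∈ Ideal.span S :=
      Ideal.subset_span (by simp [hS])
    have mQ2 : (x2 * y - MvPolynomial.C t *
        (MvPolynomial.C b1 * x1 * x4 - MvPolynomial.C a0 * x0 * x5)) ∈ Ideal.span S :=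
      Ideal.subset_span (by simp [hS])
    have mP7 : (MvPolynomial.C a0 * x0 * Pf2345 - MvPolynomial.C b1 * x1 * Pf1345)
        ∈ Ideal.span S := Ideal.subset_span (by simp [hS])
    have key : ∀ p : MvPolynomial (Fin 14) k,
        MvPolynomial.C t * p ∈ Ideal.span S → p ∈ Ideal.span S := by
      intro p hp
      have : p = MvPolynomial.C u * (MvPolynomial.C t * p) := by
        rw [← mul_assoc, ← MvPolynomial.C_mul, mul_comm u t, hu]
        simp
      rw [this]
      exact Ideal.mul_mem_left _ _ hp
    intro z hz
    simp only [Set.mem_insert_iff, Set.mem_singleton_iff] at hz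
    rcases hz with rfl | rfl | rfl | rfl | rfl | rfl | rfl | rfl
    · exact mQ0
    · exact mQ1
    · exact mQ2
    · exact key _ (h3 ▸ Ideal.sub_mem _ (Ideal.mul_mem_left _ _ mQ1)
        (Ideal.mul_mem_left _ _ mQ2))
    · exact key _ (h2 ▸ Ideal.sub_mem _ (Ideal.mul_mem_left _ _ mQ0)
        (Ideal.mul_mem_left _ _ mQ2))
    · exact key _ (h1 ▸ Ideal.sub_mem _ (Ideal.mul_mem_left _ _ mQ0)
        (Ideal.mul_mem_left _ _ mQ1))
    · exact mP7
    · exact key _ (h4 ▸ Ideal.sub_mem _ (Ideal.sub_mem _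
        (Ideal.mul_mem_left _ _ mQ0) (Ideal.mul_mem_left _ _ mQ1))
        (Ideal.mul_mem_left _ _ mP7))
  · apply Ideal.span_mono
    intro z hz
    simp only [Set.mem_insert_iff, Set.mem_singleton_iff] at hz ⊢
    tauto
end

section
/- With the notation of the degenerate [331]aii deformation, if t ≠ 0 and a0 ≠ 0 then the ideal of R generated by {Q0', Q1, Q2, Pf1, Pf2, Pf3, Pf4, Pf5, Pf6, Pf7, H} equals the ideal generated by {Q0', Q1, Q2, Pf1, Pf2, Pf3, Pf4, Pf7} (i.e., for t invertible the generators Pf5, Pf6 and the quartic H are redundant, and the general fibre is a variety of Type [310]ai defined by the three quadrics, the four cubics Pf1, Pf2, Pf3, Pf4 and the extra cubic Pf7). -/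


private lemma cancel_mem {k : Type*} [Field k] {σ : Type*}
    {I : Ideal (MvPolynomial σ k)} {c : k} (hc : c ≠ 0)
    {p q : MvPolynomial σ k} (h : MvPolynomial.C c * p = q) (hq : q ∈ I) :
    p ∈ I := by
  have hp : p = MvPolynomial.C c⁻¹ * q := by
    rw [← h, ← mul_assoc, ← MvPolynomial.C_mul, inv_mul_cancel₀ hc,
      MvPolynomial.C_1, one_mul]
  rw [hp]
  exact I.mul_mem_left _ hq

/-- Degenerate [331]aii deformation: over a field `k`, if `t ≠ 0` and
`a0 ≠ 0` then in `R = k[x0,…,x12,y]` the ideal generated by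
`{Q0', Q1, Q2, Pf1, Pf2, Pf3, Pf4, Pf5, Pf6, Pf7, H}` equals the ideal
generated by `{Q0', Q1, Q2, Pf1, Pf2, Pf3, Pf4, Pf7}`, i.e. for `t`
invertible the generators `Pf5`, `Pf6` and the quartic `H` are redundant,
the general fibre being a variety of Type [310]ai. -/
theorem stmt_19 {k : Type*} [Field k]
    (a0 b1 t : k) (ht : t ≠ 0) (ha0 : a0 ≠ 0)
    (x0 x1 x2 x3 x4 x5 x6 x7 x8 x9 x10 x11 x12 y
      Pf1234 Pf1235 Pf1245 Pf1345 Pf2345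
      Q0' Q1 Q2 Pf1 Pf2 Pf3 Pf4 Pf5 Pf6 Pf7 H : MvPolynomial (Fin 14) k)
    (hx0 : x0 = MvPolynomial.X 0) (hx1 : x1 = MvPolynomial.X 1)
    (hx2 : x2 = MvPolynomial.X 2) (hx3 : x3 = MvPolynomial.X 3)
    (hx4 : x4 = MvPolynomial.X 4) (hx5 : x5 = MvPolynomial.X 5)
    (hx6 : x6 = MvPolynomial.X 6) (hx7 : x7 = MvPolynomial.X 7)
    (hx8 : x8 = MvPolynomial.X 8) (hx9 : x9 = MvPolynomial.X 9)
    (hx10 : x10 = MvPolynomial.X 10) (hx11 : x11 = MvPolynomial.X 11)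
    (hx12 : x12 = MvPolynomial.X 12) (hy : y = MvPolynomial.X 13)
    (hPf1234 : Pf1234 = x3 * x8 - x4 * x7 + x5 * x6)
    (hPf1235 : Pf1235 = x3 * x11 - x4 * x10 + x5 * x9)
    (hPf1245 : Pf1245 = x3 * x12 - x6 * x10 + x7 * x9)
    (hPf1345 : Pf1345 = x4 * x12 - x6 * x11 + x8 * x9)
    (hPf2345 : Pf2345 = x5 * x12 - x7 * x11 + x8 * x10)
    (hQ0' : Q0' = x0 * y + MvPolynomial.C t * Pf1234)
    (hQ1 : Q1 = x1 * y) (hQ2 : Q2 = x2 * y)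
    (hPf1 : Pf1 = x2 * Pf2345 - MvPolynomial.C b1 * x1 ^ 2 * x8)
    (hPf2 : Pf2 = x2 * Pf1345 - MvPolynomial.C a0 * x0 * x1 * x8)
    (hPf3 : Pf3 = x2 * Pf1245 - MvPolynomial.C a0 * x0 * x1 * x7 +
      MvPolynomial.C b1 * x1 ^ 2 * x6)
    (hPf4 : Pf4 = x2 * Pf1235 - MvPolynomial.C a0 * x0 * x1 * x5 +
      MvPolynomial.C b1 * x1 ^ 2 * x4)
    (hPf5 : Pf5 = x2 * Pf1234)
    (hPf6 : Pf6 = x1 * Pf1234)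
    (hPf7 : Pf7 = MvPolynomial.C a0 * x0 * Pf2345 -
      MvPolynomial.C b1 * x1 * Pf1345)
    (hH : H = Pf1234 * Pf2345) :
    Ideal.span {Q0', Q1, Q2, Pf1, Pf2, Pf3, Pf4, Pf5, Pf6, Pf7, H} =
      Ideal.span {Q0', Q1, Q2, Pf1, Pf2, Pf3, Pf4, Pf7} := by
  set I := Ideal.span {Q0', Q1, Q2, Pf1, Pf2, Pf3, Pf4, Pf7} with hI
  have hQ0'I : Q0' ∈ I := Ideal.subset_span (by simp)
  have hQ1I : Q1 ∈ I := Ideal.subset_span (by simp)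
  have hQ2I : Q2 ∈ I := Ideal.subset_span (by simp)
  have hPf7I : Pf7 ∈ I := Ideal.subset_span (by simp)
  have hPf2345I : MvPolynomial.C b1 * x1 * Pf1345 * Q1 ∈ I := I.mul_mem_left _ hQ1I
  have hPf5I : Pf5 ∈ I := by
    refine cancel_mem ht (q := x2 * Q0' - x0 * Q2) ?_ (I.sub_mem (I.mul_mem_left _ hQ0'I) (I.mul_mem_left _ hQ2I))
    subst hQ0' hQ2 hPf5 hPf1234; ring
  have hPf6I : Pf6 ∈ I := by
    refine cancel_mem ht (q := x1 * Q0' - x0 * Q1) ?_ (I.sub_mem (I.mul_mem_left _ hQ0'I) (I.mul_mem_left _ hQ1I))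
    subst hQ0' hQ1 hPf6 hPf1234; ring
  have hHI : H ∈ I := by
    have hat : a0 * t ≠ 0 := mul_ne_zero ha0 ht
    refine cancel_mem hat
      (q := MvPolynomial.C a0 * Pf2345 * Q0' - y * Pf7 - MvPolynomial.C b1 * Pf1345 * Q1)
      ?_ (I.sub_mem (I.sub_mem (I.mul_mem_left _ hQ0'I) (I.mul_mem_left _ hPf7I)) (I.mul_mem_left _ hQ1I))
    subst hQ0' hQ1 hPf7 hH hPf1234 hPf2345 hPf1345
    rw [MvPolynomial.C_mul]; ring
  apply le_antisymm
  · rw [Ideal.span_le]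
    intro p hp
    simp only [Set.mem_insert_iff, Set.mem_singleton_iff] at hp
    rcases hp with h|h|h|h|h|h|h|h|h|h|h <;> subst h
    · exact hQ0'I
    · exact hQ1I
    · exact hQ2I
    · exact Ideal.subset_span (by simp)
    · exact Ideal.subset_span (by simp)
    · exact Ideal.subset_span (by simp)
    · exact Ideal.subset_span (by simp)
    · exact hPf5I
    · exact hPf6I
    · exact hPf7I
    · exact hHI
  · exact Ideal.span_mono (by intro p hp; simp only [Set.mem_insert_iff, Set.mem_singleton_iff] at hp ⊢; tauto)
end
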